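/- arXiv:1006.5909 — 3 statements merged into one kernel-verified Lean document; each statement's English description precedes it below -/
import Mathlib

section
/- Let G be a finite subgroup of GL(N,ℂ) acting irreducibly on ℂ^N, and let T be a nonempty finite subset of the projective space ℙ(ℂ^N) that is invariant under the action of G induced on ℙ(ℂ^N). Then T has at least N elements. -/
open Matrix

/-- A nonempty finite subset of `ℙ(ℂ^N)` invariant under the projective action
of a finite irreducible subgroup `G ≤ GL(N, ℂ)` has at least `N` elements. -/
theorem stmt_1 (N : ℕ) (G : Subgroup (GL (Fin N) ℂ)) (hGfin : Finite G)
    (hirr : ∀ W : Submodule ℂ (Fin N → ℂ),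
      (∀ g ∈ G, ∀ v ∈ W, Matrix.mulVec (g : Matrix (Fin N) (Fin N) ℂ) v ∈ W) →
      W = ⊥ ∨ W = ⊤)
    (T : Set (Projectivization ℂ (Fin N → ℂ))) (hTne : T.Nonempty) (hTfin : T.Finite)
    (hTinv : ∀ g ∈ G, ∀ p ∈ T, ∃ q ∈ T,
      Projectivization.submodule q =
        Submodule.map (Matrix.mulVecLin (g : Matrix (Fin N) (Fin N) ℂ))
          (Projectivization.submodule p)) :
    N ≤ T.ncard := by
  classical
  set S : Set (Fin N → ℂ) := Projectivization.rep '' T with hS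
  set W : Submodule ℂ (Fin N → ℂ) := Submodule.span ℂ S with hW
  have hsub : ∀ p ∈ T, Projectivization.submodule p ≤ W := by
    intro p hp
    rw [Projectivization.submodule_eq]
    exact Submodule.span_le.2 (Set.singleton_subset_iff.2
      (Submodule.subset_span ⟨p, hp, rfl⟩))
  have hinv : ∀ g ∈ G, ∀ v ∈ W, Matrix.mulVec (g : Matrix (Fin N) (Fin N) ℂ) v ∈ W := by
    intro g hg v hv
    have : Submodule.map (Matrix.mulVecLin (g : Matrix (Fin N) (Fin N) ℂ)) W ≤ W := by
      rw [hW, Submodule.map_span, Submodule.span_le]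
      rintro _ ⟨_, ⟨p, hp, rfl⟩, rfl⟩
      obtain ⟨q, hq, hqe⟩ := hTinv g hg p hp
      refine hsub q hq ?_
      rw [hqe]
      exact Submodule.mem_map_of_mem (by
        rw [Projectivization.submodule_eq]
        exact Submodule.mem_span_singleton_self _)
    exact this (Submodule.mem_map_of_mem hv)
  have hWtop : W = ⊤ := by
    rcases hirr W hinv with h | h
    · exfalso
      obtain ⟨p, hp⟩ := hTne
      have : p.rep ∈ W := Submodule.subset_span ⟨p, hp, rfl⟩
      rw [h, Submodule.mem_bot] at this
      exact p.rep_nonzero this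
    · exact h
  have hSfin : S.Finite := hTfin.image _
  haveI : Fintype S := hSfin.fintype
  have h1 : N ≤ S.toFinset.card := by
    have := finrank_span_le_card (R := ℂ) S
    rw [← hW, hWtop, finrank_top] at this
    simpa using this
  calc N ≤ S.toFinset.card := h1
    _ = S.ncard := by rw [Set.ncard_eq_toFinset_card']
    _ ≤ T.ncard := by
        rw [hS]
        exact Set.ncard_image_le hTfin
end

section
/- There is no finite subgroup G of GL(4,ℂ) acting irreducibly on ℂ⁴ for which the Cayley cubic form f = xyu + xyv + xuv + yuv (a homogeneous cubic polynomial in the coordinates x, y, u, v of ℂ⁴) is a semi-invariant. -/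
open Matrix MvPolynomial

/-- The Cayley cubic form `xyu + xyv + xuv + yuv` in the coordinates `x, y, u, v` of `ℂ⁴`. -/
noncomputable def cayleyCubic : MvPolynomial (Fin 4) ℂ :=
  X 0 * X 1 * X 2 + X 0 * X 1 * X 3 + X 0 * X 2 * X 3 + X 1 * X 2 * X 3

lemma eval_cayley (p : Fin 4 → ℂ) :
    eval p cayleyCubic = p 0 * p 1 * p 2 + p 0 * p 1 * p 3 + p 0 * p 2 * p 3 + p 1 * p 2 * p 3 := by
  simp [cayleyCubic]

lemma eval_three {a b c : Fin 4} (hab : a ≠ b) (hac : a ≠ c) (hbc : b ≠ c) (x y z : ℂ) :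
    eval (Pi.single a x + Pi.single b y + Pi.single c z) cayleyCubic = x * y * z := by
  fin_cases a <;> fin_cases b <;> fin_cases c <;>
    simp_all [eval_cayley, Pi.single_apply, mul_comm, mul_assoc, mul_left_comm]


lemma key (a b c d : ℂ) (h0 : b*c + b*d + c*d = 0) (h1 : a*c + a*d + c*d = 0)
    (h2 : a*b + a*d + b*d = 0) (h3 : a*b + a*c + b*c = 0) : c * d = 0 := by
  by_contra h
  have hc : c ≠ 0 := fun hc => h (by rw [hc]; ring)
  have hd : d ≠ 0 := fun hd => h (by rw [hd]; ring)
  have hab : (b - a) * (c + d) = 0 := by linear_combination h0 - h1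
  rcases mul_eq_zero.mp hab with hba | hcd
  · have hba' : b = a := by linear_combination hba
    rw [hba'] at h0 h2 h3
    have hdc : (d - c) * (a + a) = 0 := by linear_combination h2 - h3
    rcases mul_eq_zero.mp hdc with h' | h''
    · have hdc' : d = c := by linear_combination h'
      rw [hdc'] at h0 h2 h
      rcases mul_eq_zero.mp (show c * (2*a + c) = 0 by linear_combination h0) with hc0 | hac
      · exact hc hc0
      · have hca : c = -2*a := by linear_combination hac
        rw [hca] at h2
        have ha0 : a = 0 := mul_self_eq_zero.mp (by linear_combination (-1/3 : ℂ) * h2)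
        exact hc (by rw [hca, ha0]; ring)
    · have ha0 : a = 0 := by linear_combination (1/2 : ℂ) * h''
      exact h (by linear_combination h0 - (c + d) * ha0)
  · exact h (by linear_combination h0 - b * hcd)

lemma cover : ∀ a b c d : Fin 4, a ≠ b → a ≠ c → a ≠ d → b ≠ c → b ≠ d → c ≠ d →
    ∀ j : Fin 4, j = a ∨ j = b ∨ j = c ∨ j = d := by decide

def IsNode (v : Fin 4 → ℂ) : Prop :=
  ∀ w, eval (w + v) cayleyCubic + eval (w - v) cayleyCubic = 2 * eval w cayleyCubic

lemma isNode_single (i : Fin 4) (c : ℂ) : IsNode (Pi.single i c) := by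
  intro w
  fin_cases i <;> simp [eval_cayley, Pi.single_apply] <;> ring

lemma isNode_structure {v : Fin 4 → ℂ} (hv : IsNode v) :
    ∃ i : Fin 4, ∀ j, j ≠ i → v j = 0 := by
  have E0 := hv (Pi.single 0 1); have E1 := hv (Pi.single 1 1)
  have E2 := hv (Pi.single 2 1); have E3 := hv (Pi.single 3 1)
  simp [eval_cayley, Pi.single_apply] at E0 E1 E2 E3
  have e0 : v 1 * v 2 + v 1 * v 3 + v 2 * v 3 = 0 := by linear_combination (1/2 : ℂ) * E0
  have e1 : v 0 * v 2 + v 0 * v 3 + v 2 * v 3 = 0 := by linear_combination (1/2 : ℂ) * E1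
  have e2 : v 0 * v 1 + v 0 * v 3 + v 1 * v 3 = 0 := by linear_combination (1/2 : ℂ) * E2
  have e3 : v 0 * v 1 + v 0 * v 2 + v 1 * v 2 = 0 := by linear_combination (1/2 : ℂ) * E3
  have pcd : v 2 * v 3 = 0 := key (v 0) (v 1) (v 2) (v 3) e0 e1 e2 e3
  have pab : v 0 * v 1 = 0 := key (v 2) (v 3) (v 0) (v 1) (by linear_combination e2)
    (by linear_combination e3) (by linear_combination e0) (by linear_combination e1)
  have pac : v 0 * v 2 = 0 := key (v 1) (v 3) (v 0) (v 2) (by linear_combination e1)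
    (by linear_combination e3) (by linear_combination e0) (by linear_combination e2)
  have pad : v 0 * v 3 = 0 := key (v 1) (v 2) (v 0) (v 3) (by linear_combination e1)
    (by linear_combination e2) (by linear_combination e0) (by linear_combination e3)
  have pbc : v 1 * v 2 = 0 := key (v 0) (v 3) (v 1) (v 2) (by linear_combination e0)
    (by linear_combination e3) (by linear_combination e1) (by linear_combination e2)
  have pbd : v 1 * v 3 = 0 := key (v 0) (v 2) (v 1) (v 3) (by linear_combination e0)
    (by linear_combination e2) (by linear_combination e1) (by linear_combination e3)
  by_cases ha : v 0 = 0
  · by_cases hb : v 1 = 0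
    · by_cases hc : v 2 = 0
      · exact ⟨3, fun j hj => by
          fin_cases j
          · exact ha
          · exact hb
          · exact hc
          · exact absurd rfl hj⟩
      · have hd : v 3 = 0 := (mul_eq_zero.mp pcd).resolve_left hc
        exact ⟨2, fun j hj => by
          fin_cases j
          · exact ha
          · exact hb
          · exact absurd rfl hj
          · exact hd⟩
    · have hc : v 2 = 0 := (mul_eq_zero.mp pbc).resolve_left hb
      have hd : v 3 = 0 := (mul_eq_zero.mp pbd).resolve_left hb
      exact ⟨1, fun j hj => by
        fin_cases j
        · exact ha
        · exact absurd rfl hj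
        · exact hc
        · exact hd⟩
  · have hb : v 1 = 0 := (mul_eq_zero.mp pab).resolve_left ha
    have hc : v 2 = 0 := (mul_eq_zero.mp pac).resolve_left ha
    have hd : v 3 = 0 := (mul_eq_zero.mp pad).resolve_left ha
    exact ⟨0, fun j hj => by
      fin_cases j
      · exact absurd rfl hj
      · exact hb
      · exact hc
      · exact hd⟩

lemma node_map (M M' : Matrix (Fin 4) (Fin 4) ℂ) (hMM' : M * M' = 1) (c : ℂ)
    (hc : ∀ u, eval (M.mulVec u) cayleyCubic = c * eval u cayleyCubic)
    {v : Fin 4 → ℂ} (hv : IsNode v) : IsNode (M.mulVec v) := by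
  intro w
  have hw : M.mulVec (M'.mulVec w) = w := by
    rw [Matrix.mulVec_mulVec, hMM', Matrix.one_mulVec]
  have h1 : w + M.mulVec v = M.mulVec (M'.mulVec w + v) := by
    rw [Matrix.mulVec_add, hw]
  have h2 : w - M.mulVec v = M.mulVec (M'.mulVec w - v) := by
    rw [Matrix.mulVec_sub, hw]
  have h4 : eval w cayleyCubic = c * eval (M'.mulVec w) cayleyCubic := by
    conv_lhs => rw [← hw]
    rw [hc]
  rw [h1, h2, hc, hc, h4]
  linear_combination c * hv (M'.mulVec w)

lemma single_eq_smul (i : Fin 4) (c : ℂ) :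
    (Pi.single i c : Fin 4 → ℂ) = c • (Pi.single i 1 : Fin 4 → ℂ) := by
  funext j
  by_cases h : j = i
  · subst h; simp
  · simp [Pi.single_eq_of_ne h]

lemma monomial_of (M M' : Matrix (Fin 4) (Fin 4) ℂ) (hMM' : M * M' = 1) (hM'M : M' * M = 1)
    (c : ℂ) (hc : ∀ u, eval (M.mulVec u) cayleyCubic = c * eval u cayleyCubic) :
    ∃ μ : ℂ, M.mulVec 1 = μ • (1 : Fin 4 → ℂ) := by
  have hcancel : ∀ x : Fin 4 → ℂ, M.mulVec x = 0 → x = 0 := by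
    intro x hx
    have : M'.mulVec (M.mulVec x) = x := by
      rw [Matrix.mulVec_mulVec, hM'M, Matrix.one_mulVec]
    rw [hx, Matrix.mulVec_zero] at this
    exact this.symm
  have H : ∀ i : Fin 4, ∃ s : Fin 4, ∃ μ : ℂ, μ ≠ 0 ∧
      M.mulVec (Pi.single i 1) = (Pi.single s μ : Fin 4 → ℂ) := by
    intro i
    obtain ⟨s, hs⟩ := isNode_structure (node_map M M' hMM' c hc (isNode_single i 1))
    refine ⟨s, M.mulVec (Pi.single i 1) s, ?_, ?_⟩
    · intro h0
      have hz : M.mulVec (Pi.single i 1) = 0 := by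
        funext j
        by_cases hj : j = s
        · subst hj; exact h0
        · exact hs j hj
      have := congrFun (hcancel _ hz) i
      simp at this
    · funext j
      by_cases hj : j = s
      · subst hj; simp
      · rw [hs j hj, Pi.single_eq_of_ne hj]
  choose t μ hμ hMs using H
  have tinj : ∀ i j : Fin 4, i ≠ j → t i ≠ t j := by
    intro i j hij hts
    have hx : M.mulVec (μ j • (Pi.single i 1 : Fin 4 → ℂ) - μ i • (Pi.single j 1 : Fin 4 → ℂ))
        = 0 := by
      rw [Matrix.mulVec_sub, Matrix.mulVec_smul, Matrix.mulVec_smul, hMs, hMs, hts]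
      funext k
      by_cases hk : k = t j
      · subst hk; simp [mul_comm]
      · simp [Pi.single_eq_of_ne hk]
    have := congrFun (hcancel _ hx) i
    simp [Pi.single_eq_of_ne (Ne.symm hij), Pi.single_eq_of_ne hij] at this
    exact hμ j this
  have prod : ∀ i j k : Fin 4, i ≠ j → i ≠ k → j ≠ k → μ i * μ j * μ k = c := by
    intro i j k hij hik hjk
    have h := hc (Pi.single i 1 + Pi.single j 1 + Pi.single k 1)
    rw [Matrix.mulVec_add, Matrix.mulVec_add, hMs, hMs, hMs,
      eval_three (tinj i j hij) (tinj i k hik) (tinj j k hjk),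
      eval_three hij hik hjk] at h
    rw [h]; ring
  have p012 := prod 0 1 2 (by decide) (by decide) (by decide)
  have p013 := prod 0 1 3 (by decide) (by decide) (by decide)
  have p023 := prod 0 2 3 (by decide) (by decide) (by decide)
  have p123 := prod 1 2 3 (by decide) (by decide) (by decide)
  have h23 : μ 2 = μ 3 := by
    have h : μ 2 * (μ 0 * μ 1) = μ 3 * (μ 0 * μ 1) := by
      linear_combination p012 - p013
    exact mul_right_cancel₀ (mul_ne_zero (hμ 0) (hμ 1)) h
  have h12 : μ 1 = μ 2 := by
    have h : μ 1 * (μ 0 * μ 3) = μ 2 * (μ 0 * μ 3) := by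
      linear_combination p013 - p023
    exact mul_right_cancel₀ (mul_ne_zero (hμ 0) (hμ 3)) h
  have h01 : μ 0 = μ 1 := by
    have h : μ 0 * (μ 2 * μ 3) = μ 1 * (μ 2 * μ 3) := by
      linear_combination p023 - p123
    exact mul_right_cancel₀ (mul_ne_zero (hμ 2) (hμ 3)) h
  refine ⟨μ 0, ?_⟩
  have hone : (1 : Fin 4 → ℂ) =
      Pi.single 0 1 + Pi.single 1 1 + Pi.single 2 1 + Pi.single 3 1 := by
    funext j; fin_cases j <;> simp [Pi.single_apply]
  have hμ1 : μ 1 = μ 0 := h01.symm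
  have hμ2 : μ 2 = μ 0 := by rw [← h12, ← h01]
  have hμ3 : μ 3 = μ 0 := by rw [← h23, ← h12, ← h01]
  have hM1 : M.mulVec 1 = Pi.single (t 0) (μ 0) + Pi.single (t 1) (μ 0)
      + Pi.single (t 2) (μ 0) + Pi.single (t 3) (μ 0) := by
    conv_lhs => rw [hone, Matrix.mulVec_add, Matrix.mulVec_add, Matrix.mulVec_add,
      hMs, hMs, hMs, hMs, hμ1, hμ2, hμ3]
  rw [hM1]
  funext j
  rcases cover (t 0) (t 1) (t 2) (t 3) (tinj 0 1 (by decide)) (tinj 0 2 (by decide))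
    (tinj 0 3 (by decide)) (tinj 1 2 (by decide)) (tinj 1 3 (by decide))
    (tinj 2 3 (by decide)) j with h | h | h | h <;> subst h <;>
    simp [Pi.single_apply, (tinj 0 1 (by decide)), (tinj 0 2 (by decide)),
      (tinj 0 3 (by decide)), (tinj 1 2 (by decide)), (tinj 1 3 (by decide)),
      (tinj 2 3 (by decide)), Ne.symm (tinj 0 1 (by decide)), Ne.symm (tinj 0 2 (by decide)),
      Ne.symm (tinj 0 3 (by decide)), Ne.symm (tinj 1 2 (by decide)),
      Ne.symm (tinj 1 3 (by decide)), Ne.symm (tinj 2 3 (by decide))]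


/-- No finite subgroup of `GL(4, ℂ)` acting irreducibly on `ℂ⁴` has the Cayley
cubic form as a semi-invariant. -/
theorem stmt_9 :
    ¬ ∃ G : Subgroup (GL (Fin 4) ℂ), Finite G ∧
      (∀ W : Submodule ℂ (Fin 4 → ℂ),
        (∀ g ∈ G, ∀ v ∈ W, Matrix.mulVec (g : Matrix (Fin 4) (Fin 4) ℂ) v ∈ W) →
        W = ⊥ ∨ W = ⊤) ∧
      (∃ χ : G →* ℂˣ, ∀ (g : G) (v : Fin 4 → ℂ),
        MvPolynomial.eval
            (Matrix.mulVec (((g : GL (Fin 4) ℂ)⁻¹ : GL (Fin 4) ℂ) : Matrix (Fin 4) (Fin 4) ℂ) v)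
            cayleyCubic
          = (χ g : ℂ) * MvPolynomial.eval v cayleyCubic) := by
  rintro ⟨G, _hfin, hirr, χ, hχ⟩
  have main : ∀ g : G, ∃ μ : ℂ,
      Matrix.mulVec ((g : GL (Fin 4) ℂ) : Matrix (Fin 4) (Fin 4) ℂ) 1 = μ • (1 : Fin 4 → ℂ) := by
    intro g
    have h : ∀ u, eval (Matrix.mulVec ((g : GL (Fin 4) ℂ) : Matrix (Fin 4) (Fin 4) ℂ) u)
        cayleyCubic = (χ g⁻¹ : ℂ) * eval u cayleyCubic := by
      intro u
      have := hχ g⁻¹ u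
      simpa using this
    exact monomial_of _ (((g : GL (Fin 4) ℂ)⁻¹ : GL (Fin 4) ℂ) : Matrix (Fin 4) (Fin 4) ℂ)
      (Units.mul_inv _) (Units.inv_mul _) _ h
  set W : Submodule ℂ (Fin 4 → ℂ) := Submodule.span ℂ {(1 : Fin 4 → ℂ)} with hWdef
  have hWinv : ∀ g ∈ G, ∀ v ∈ W, Matrix.mulVec (g : Matrix (Fin 4) (Fin 4) ℂ) v ∈ W := by
    intro g hg v hv
    obtain ⟨a, rfl⟩ := Submodule.mem_span_singleton.mp hv
    obtain ⟨μ, hm⟩ := main ⟨g, hg⟩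
    rw [Matrix.mulVec_smul]
    have : Matrix.mulVec (g : Matrix (Fin 4) (Fin 4) ℂ) 1 = μ • (1 : Fin 4 → ℂ) := hm
    rw [this]
    exact Submodule.smul_mem _ _ (Submodule.smul_mem _ _ (Submodule.mem_span_singleton_self _))
  rcases hirr W hWinv with hbot | htop
  · have h1 : (1 : Fin 4 → ℂ) ∈ W := Submodule.mem_span_singleton_self _
    rw [hbot] at h1
    have := congrFun (Submodule.mem_bot ℂ |>.mp h1) 0
    norm_num at this
  · have hmem : (Pi.single 0 1 : Fin 4 → ℂ) ∈ W := htop ▸ Submodule.mem_top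
    obtain ⟨a, ha⟩ := Submodule.mem_span_singleton.mp hmem
    have h0 := congrFun ha 0
    have h1 := congrFun ha 1
    simp at h0 h1
    rw [h0] at h1
    norm_num at h1
end

section
/- Let m ≥ 5 be an integer, and let G ≤ GL(4,ℂ) be the subgroup generated by the 24 permutation matrices of the four coordinates together with all diagonal matrices diag(ε₁, ε₂, ε₃, ε₄) where each εᵢ is an m-th root of unity. Then: (1) G acts irreducibly on ℂ⁴; and (2) every homogeneous polynomial in ℂ[x,y,u,v] of degree 1, 2, or 3 that is a semi-invariant of G is zero. -/
/-!
Irreducibility: a nonzero invariant subspace contains a vector `v` with `v i ≠ 0`; scaling the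
`i`-th coordinate by a primitive `m`-th root of unity `ζ ≠ 1` and subtracting `v` leaves a
nonzero multiple of `e i`, and the permutations then move `e i` to every basis vector.

Semi-invariants: a diagonal element scales the monomial `x^a` by a character of `a`, so on the
support of a semi-invariant `f` all values `ζ ^ a i` agree, while the permutations keep the
support stable. For `a` in the support, `a i` and `a j` are thus congruent modulo `m`, hence equal
when the degree is below `m`; a monomial with four equal exponents has degree divisible by `4`.
-/

open Matrix MvPolynomial

/-- The subgroup of `GL(4, ℂ)` generated by the 24 permutation matrices of the four
coordinates together with all diagonal matrices whose entries are `m`-th roots of unity. -/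
def fermatGroup (m : ℕ) : Subgroup (GL (Fin 4) ℂ) :=
  Subgroup.closure
    {g | (∃ σ : Equiv.Perm (Fin 4),
        (g : Matrix (Fin 4) (Fin 4) ℂ) = Matrix.of fun i j => if i = σ j then 1 else 0) ∨
      (∃ ε : Fin 4 → ℂ, (∀ i, ε i ^ m = 1) ∧
        (g : Matrix (Fin 4) (Fin 4) ℂ) = Matrix.diagonal ε)}

section Coefficients

variable {ι R : Type*} [CommRing R] [IsDomain R] [Infinite R] {f : MvPolynomial ι R} {t : R}
  {a : ι →₀ ℕ}

theorem MvPolynomial.mapDomain_mem_support_of_eval_comp {σ : ι → ι} (hσ : σ.Injective)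
    (h : ∀ v, eval (v ∘ σ) f = t * eval v f) (ha : a ∈ f.support) :
    a.mapDomain σ ∈ f.support := by
  have hrename : rename σ f = C t * f := MvPolynomial.funext fun v => by simp [eval_rename, h]
  have := coeff_rename_mapDomain σ hσ f a
  rw [hrename, coeff_C_mul] at this
  rw [mem_support_iff] at ha ⊢
  exact right_ne_zero_of_mul (this ▸ ha)

theorem MvPolynomial.prod_pow_eq_of_eval_mul {c : ι → R}
    (h : ∀ v, eval (c * v) f = t * eval v f) (ha : a ∈ f.support) :
    (a.prod fun k e => c k ^ e) = t := by
  classical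
  set g := ∑ b ∈ f.support, monomial b (coeff b f * b.prod fun k e => c k ^ e)
  have hg : g = C t * f := MvPolynomial.funext fun v => by
    rw [eval_mul, eval_C, ← h, eval_eq (c * v) f, map_sum]
    simp [eval_monomial, mul_pow, Finset.prod_mul_distrib, Finsupp.prod, mul_assoc]
  have := congrArg (coeff a) hg
  simp only [g, coeff_sum, coeff_monomial, Finset.sum_ite_eq', ha, ↓reduceIte, coeff_C_mul]
    at this
  exact mul_left_cancel₀ (mem_support_iff.1 ha) (this.trans (mul_comm _ _))

end Coefficients

section

variable {n K : Type*} [Fintype n] [DecidableEq n]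

theorem Submodule.eq_bot_or_eq_top_of_comp_mem_of_mulSingle_mul_mem [Field K]
    {W : Submodule K (n → K)}
    (hperm : ∀ σ : Equiv.Perm n, ∀ v ∈ W, v ∘ σ ∈ W)
    (hdiag : ∀ i, ∃ ζ ≠ 1, ∀ v ∈ W, Pi.mulSingle i ζ * v ∈ W) :
    W = ⊥ ∨ W = ⊤ := by
  refine or_iff_not_imp_left.2 fun hW => ?_
  obtain ⟨v, hvW, hv⟩ := W.exists_mem_ne_zero_of_ne_bot hW
  obtain ⟨i, hi⟩ := Function.ne_iff.1 hv
  obtain ⟨ζ, hζ, hζW⟩ := hdiag i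
  have hsingle_i : Pi.single i 1 ∈ W := by
    have hdiff : Pi.mulSingle i ζ * v - v = ((ζ - 1) * v i) • Pi.single i 1 := by
      ext k
      rcases eq_or_ne k i with rfl | hk
      · simp only [Pi.sub_apply, Pi.mul_apply, Pi.mulSingle_eq_same, Pi.smul_apply,
          Pi.single_eq_same, smul_eq_mul, mul_one]
        ring
      · simp [hk]
    have := W.smul_mem ((ζ - 1) * v i)⁻¹ (hdiff ▸ W.sub_mem (hζW v hvW) hvW)
    rwa [smul_smul, inv_mul_cancel₀ (mul_ne_zero (sub_ne_zero.2 hζ) hi), one_smul] at this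
  have hsingle : ∀ j, Pi.single j 1 ∈ W := fun j => by
    convert hperm (Equiv.swap i j) _ hsingle_i using 1
    ext k
    simp [Pi.single_apply, Equiv.swap_apply_eq_iff]
  rw [eq_top_iff, ← (Pi.basisFun K n).span_eq, Submodule.span_le]
  rintro _ ⟨j, rfl⟩
  simpa using hsingle j

def IsSemiInvariant [CommRing K]
    (G : Subgroup (GL n K)) (f : MvPolynomial n K) : Prop :=
  ∃ χ : G →* Kˣ, ∀ (g : G) (v : n → K),
    eval ((((g : GL n K)⁻¹ : GL n K) : Matrix n n K) *ᵥ v) f = (χ g : K) * eval v f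

theorem IsSemiInvariant.exists_eval_mulVec [CommRing K]
    {G : Subgroup (GL n K)} {f : MvPolynomial n K} (hf : IsSemiInvariant G f) {g : GL n K}
    (hg : g ∈ G) : ∃ t : K, ∀ v, eval ((g : Matrix n n K) *ᵥ v) f = t * eval v f := by
  obtain ⟨χ, hχ⟩ := hf
  let g' : G := ⟨g⁻¹, G.inv_mem hg⟩
  exact ⟨χ g', fun v => by simpa [g'] using hχ g' v⟩

end

theorem exists_mem_fermatGroup_mulVec_eq_comp (m : ℕ) (σ : Equiv.Perm (Fin 4)) :
    ∃ g ∈ fermatGroup m, ∀ v, (g : Matrix (Fin 4) (Fin 4) ℂ) *ᵥ v = v ∘ σ := by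
  have hg : ((permMatrixHom.toHomUnits σ⁻¹ : GL (Fin 4) ℂ) : Matrix (Fin 4) (Fin 4) ℂ) =
      σ.permMatrix ℂ := by
    rw [MonoidHom.coe_toHomUnits, permMatrixHom_apply, inv_inv]
  refine ⟨_, Subgroup.subset_closure (Or.inl ⟨σ⁻¹, ?_⟩),
    fun v => by rw [hg, permMatrix_mulVec]⟩
  rw [hg]
  ext i j
  simp [PEquiv.toMatrix_apply, Equiv.eq_symm_apply, eq_comm]

theorem exists_mem_fermatGroup_mulVec_eq_mulSingle_mul {m : ℕ} {ζ : ℂ} (hζ : ζ ^ m = 1)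
    (hζ0 : ζ ≠ 0) (i : Fin 4) :
    ∃ g ∈ fermatGroup m,
      ∀ v, (g : Matrix (Fin 4) (Fin 4) ℂ) *ᵥ v = Pi.mulSingle i ζ * v := by
  have hdet : (diagonal (Pi.mulSingle i ζ)).det ≠ 0 := by
    simp [det_diagonal, Pi.mulSingle_apply, hζ0]
  refine ⟨GeneralLinearGroup.mkOfDetNeZero _ hdet,
    Subgroup.subset_closure (Or.inr ⟨_, fun k => ?_, rfl⟩), fun v => ?_⟩
  · rcases eq_or_ne k i with rfl | hk <;> simp [*]
  · ext k
    simp [mulVec_diagonal]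

theorem eq_bot_or_eq_top_of_fermatGroup_mulVec_mem {m : ℕ} (hm : 2 ≤ m)
    {W : Submodule ℂ (Fin 4 → ℂ)}
    (hW : ∀ g ∈ fermatGroup m, ∀ v ∈ W, (g : Matrix (Fin 4) (Fin 4) ℂ) *ᵥ v ∈ W) :
    W = ⊥ ∨ W = ⊤ := by
  obtain ⟨ζ, hζ⟩ : ∃ ζ : ℂ, IsPrimitiveRoot ζ m :=
    ⟨_, Complex.isPrimitiveRoot_exp m (by omega)⟩
  refine W.eq_bot_or_eq_top_of_comp_mem_of_mulSingle_mul_mem (fun σ v hv => ?_)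
    (fun i => ⟨ζ, hζ.ne_one hm, fun v hv => ?_⟩)
  · obtain ⟨g, hg, hgv⟩ := exists_mem_fermatGroup_mulVec_eq_comp m σ
    exact hgv v ▸ hW g hg v hv
  · obtain ⟨g, hg, hgv⟩ :=
      exists_mem_fermatGroup_mulVec_eq_mulSingle_mul hζ.pow_eq_one (hζ.ne_zero (by omega)) i
    exact hgv v ▸ hW g hg v hv

theorem IsSemiInvariant.fermatGroup_apply_eq {m : ℕ} {f : MvPolynomial (Fin 4) ℂ}
    (hf : IsSemiInvariant (fermatGroup m) f) {a : Fin 4 →₀ ℕ} (ha : a ∈ f.support)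
    (hlt : ∀ k, a k < m) (i j : Fin 4) : a i = a j := by
  have hm : m ≠ 0 := (hlt i).ne_bot
  obtain ⟨ζ, hζ⟩ : ∃ ζ : ℂ, IsPrimitiveRoot ζ m := ⟨_, Complex.isPrimitiveRoot_exp m hm⟩
  obtain ⟨gσ, hgσ, hσ⟩ := exists_mem_fermatGroup_mulVec_eq_comp m (Equiv.swap i j)
  obtain ⟨s, hs⟩ := hf.exists_eval_mulVec hgσ
  have hb : a.mapDomain (Equiv.swap i j) ∈ f.support :=
    mapDomain_mem_support_of_eval_comp (Equiv.injective _) (fun v => by rw [← hσ, hs]) ha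
  have hbi : a.mapDomain (Equiv.swap i j) i = a j := by simp
  obtain ⟨gε, hgε, hε⟩ :=
    exists_mem_fermatGroup_mulVec_eq_mulSingle_mul hζ.pow_eq_one (hζ.ne_zero hm) i
  obtain ⟨t, ht⟩ := hf.exists_eval_mulVec hgε
  have hpow : ∀ b ∈ f.support, ζ ^ b i = t := fun b hb => by
    rw [← prod_pow_eq_of_eval_mul (c := Pi.mulSingle i ζ) (t := t)
        (fun v => by rw [← hε, ht]) hb, Finsupp.prod_fintype _ _ (by simp),
      Finset.prod_eq_single i (fun k _ hk => by simp [hk]) (by simp), Pi.mulSingle_eq_same]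
  rw [← hbi]
  exact hζ.pow_inj (hlt i) (hbi ▸ hlt j) ((hpow a ha).trans (hpow _ hb).symm)

theorem IsSemiInvariant.fermatGroup_eq_zero_of_isHomogeneous {m d : ℕ}
    {f : MvPolynomial (Fin 4) ℂ} (hf : IsSemiInvariant (fermatGroup m) f)
    (hhom : f.IsHomogeneous d) (hdm : d < m) (hd : ¬ 4 ∣ d) : f = 0 := by
  by_contra hf0
  obtain ⟨a, ha⟩ := Finset.nonempty_iff_ne_empty.2 (mt support_eq_empty.1 hf0)
  have hdeg : a.degree = d := (hhom.degree_eq_sum_deg_support ha).symm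
  have hconst := hf.fermatGroup_apply_eq ha fun k => (a.le_degree k).trans_lt (hdeg ▸ hdm)
  apply hd
  rw [← hdeg, Finsupp.degree_eq_sum, Fin.sum_univ_four, hconst 1 0, hconst 2 0, hconst 3 0]
  exact ⟨a 0, by ring⟩

/-- For `m ≥ 5`, the group generated by the coordinate permutation matrices and
the diagonal matrices with `m`-th root of unity entries acts irreducibly on `ℂ⁴` and has no
nonzero homogeneous semi-invariants of degree 1, 2 or 3. -/
theorem stmt_10 (m : ℕ) (hm : 5 ≤ m) :
    (∀ W : Submodule ℂ (Fin 4 → ℂ),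
      (∀ g ∈ fermatGroup m, ∀ v ∈ W, Matrix.mulVec (g : Matrix (Fin 4) (Fin 4) ℂ) v ∈ W) →
      W = ⊥ ∨ W = ⊤) ∧
    (∀ (f : MvPolynomial (Fin 4) ℂ) (d : ℕ), 1 ≤ d → d ≤ 3 → f.IsHomogeneous d →
      (∃ χ : fermatGroup m →* ℂˣ, ∀ (g : fermatGroup m) (v : Fin 4 → ℂ),
        MvPolynomial.eval
            (Matrix.mulVec (((g : GL (Fin 4) ℂ)⁻¹ : GL (Fin 4) ℂ) : Matrix (Fin 4) (Fin 4) ℂ) v) f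
          = (χ g : ℂ) * MvPolynomial.eval v f) →
      f = 0) :=
  ⟨fun _ hW => eq_bot_or_eq_top_of_fermatGroup_mulVec_mem (by omega) hW,
    fun _ _ hd1 hd3 hhom hf =>
      IsSemiInvariant.fermatGroup_eq_zero_of_isHomogeneous hf hhom (by omega) (by omega)⟩
end
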